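/- For all quaternion matrices A, X ∈ ℍ^{M×N}, ‖A − FQDCT^L(X)‖_F = ‖IQDCT^L(A) − X‖_F; that is, the residual of a quaternion matrix against the left QDCT of X has the same Frobenius norm as the residual of the left inverse QDCT of that matrix against X. -/

import Mathlib

/-!
With `D` the orthonormal DCT-II matrix, `FQDCT^L(X) = q̇ · (D ⊗ D) X` and
`IQDCT^L(C) = q̇⁻¹ · (D ⊗ D)ᵀ C`, the real matrix `D ⊗ D` acting on the flattened quaternion
matrices. Orthogonality of `D` (a telescoping sum of cosines) makes `IQDCT^L` a left inverse of
`FQDCT^L` and, as `|q̇| = 1`, an isometry for the Frobenius norm. Hence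
`‖IQDCT^L(A) − X‖_F = ‖IQDCT^L(A − FQDCT^L(X))‖_F = ‖A − FQDCT^L(X)‖_F`.
-/

open Matrix

/-- Normalization factor of the DCT: `α(u) = √(1/M)` if `u = 0`, `√(2/M)` otherwise. -/
noncomputable def dctAlpha (M : ℕ) (u : Fin M) : ℝ :=
  if (u : ℕ) = 0 then Real.sqrt (1 / M) else Real.sqrt (2 / M)

/-- DCT kernel `N(u,v,m,n) = cos(π(2m+1)u/(2M)) · cos(π(2n+1)v/(2N))`. -/
noncomputable def dctKer (M N : ℕ) (u : Fin M) (v : Fin N) (m : Fin M) (n : Fin N) : ℝ :=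
  Real.cos (Real.pi * (2 * (m : ℝ) + 1) * (u : ℝ) / (2 * (M : ℝ))) *
    Real.cos (Real.pi * (2 * (n : ℝ) + 1) * (v : ℝ) / (2 * (N : ℝ)))

/-- Left forward quaternion discrete cosine transform:
`FQDCT^L(Q)(u,v) = α(u)β(v) Σ_m Σ_n q̇ · Q(m,n) · N(u,v,m,n)`. -/
noncomputable def FQDCTL (M N : ℕ) (q : Quaternion ℝ)
    (Q : Matrix (Fin M) (Fin N) (Quaternion ℝ)) :
    Matrix (Fin M) (Fin N) (Quaternion ℝ) :=
  Matrix.of fun u v =>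
    (dctAlpha M u * dctAlpha N v) •
      ∑ m : Fin M, ∑ n : Fin N, (dctKer M N u v m n) • (q * Q m n)

/-- Left inverse quaternion discrete cosine transform:
`IQDCT^L(C)(m,n) = Σ_u Σ_v α(u)β(v) · q̇⁻¹ · C(u,v) · N(u,v,m,n)` with `q̇⁻¹ = −q̇`. -/
noncomputable def IQDCTL (M N : ℕ) (q : Quaternion ℝ)
    (C : Matrix (Fin M) (Fin N) (Quaternion ℝ)) :
    Matrix (Fin M) (Fin N) (Quaternion ℝ) :=
  Matrix.of fun m n =>
    ∑ u : Fin M, ∑ v : Fin N,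
      (dctAlpha M u * dctAlpha N v) • ((dctKer M N u v m n) • ((-q) * C u v))

/-- Frobenius norm of a quaternion matrix: `‖A‖_F = sqrt(Σ_{m,n} |A(m,n)|²)`. -/
noncomputable def frob {M N : ℕ} (A : Matrix (Fin M) (Fin N) (Quaternion ℝ)) : ℝ :=
  Real.sqrt (∑ m : Fin M, ∑ n : Fin N, ‖A m n‖ ^ 2)

open Finset Real

section RealMatrixAction

variable {ι κ : Type*} [Fintype ι] [Fintype κ] [DecidableEq ι] {K : Matrix κ ι ℝ}

theorem sum_smul_sum_smul_of_transpose_mul_self {E : Type*} [AddCommGroup E] [Module ℝ E]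
    (hK : Kᵀ * K = 1) (g : ι → E) (k : ι) :
    ∑ i, K i k • ∑ l, K i l • g l = g k := by
  simp_rw [smul_sum, smul_smul]
  rw [sum_comm]
  simp_rw [← sum_smul]
  have hKk : ∀ l, ∑ i, K i k * K i l = (1 : Matrix ι ι ℝ) k l := fun l => by
    rw [← hK, Matrix.mul_apply]; rfl
  simp [hKk, Matrix.one_apply]

theorem sum_norm_sq_sum_smul_of_transpose_mul_self {E : Type*} [NormedAddCommGroup E]
    [InnerProductSpace ℝ E] (hK : Kᵀ * K = 1) (g : ι → E) :
    ∑ i, ‖∑ k, K i k • g k‖ ^ 2 = ∑ k, ‖g k‖ ^ 2 := by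
  set h : κ → E := fun i => ∑ k, K i k • g k
  calc ∑ i, ‖h i‖ ^ 2 = ∑ i, ∑ k, K i k * inner ℝ (g k) (h i) := by
        simp_rw [← real_inner_self_eq_norm_sq, h, sum_inner, real_inner_smul_left]
    _ = ∑ k, inner ℝ (g k) (∑ i, K i k • h i) := by
        rw [sum_comm]; simp_rw [inner_sum, real_inner_smul_right]
    _ = ∑ k, ‖g k‖ ^ 2 := by
        simp_rw [h, sum_smul_sum_smul_of_transpose_mul_self hK, real_inner_self_eq_norm_sq]

end RealMatrixAction

theorem norm_eq_one_of_sq_eq_neg_one {R : Type*} [NormedDivisionRing R] {x : R}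
    (hx : x ^ 2 = -1) : ‖x‖ = 1 := by
  have h : ‖x‖ ^ 2 = 1 := by rw [← norm_pow, hx, norm_neg, norm_one]
  exact (pow_eq_one_iff_of_nonneg (norm_nonneg x) two_ne_zero).mp h

theorem two_mul_sin_mul_sum_range_cos_odd_mul (θ : ℝ) (n : ℕ) :
    2 * sin θ * ∑ m ∈ range n, cos ((2 * m + 1) * θ) = sin (2 * n * θ) := by
  induction n with
  | zero => simp
  | succ n ih =>
    rw [sum_range_succ, mul_add, ih]
    have h₁ : 2 * ((n + 1 : ℕ) : ℝ) * θ = (2 * n + 1) * θ + θ := by push_cast; ring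
    have h₂ : 2 * (n : ℝ) * θ = (2 * n + 1) * θ - θ := by ring
    rw [h₁, h₂, sin_add, sin_sub]
    ring

theorem sum_range_cos_pi_mul_odd_div (n : ℕ) (k : ℤ) (hk : |k| < 2 * n) :
    ∑ m ∈ range n, cos (π * (2 * m + 1) * k / (2 * n)) = if k = 0 then (n : ℝ) else 0 := by
  split_ifs with hk0
  · simp [hk0]
  obtain ⟨hk₁, hk₂⟩ : -(2 * n : ℝ) < k ∧ (k : ℝ) < 2 * n := by
    rw [← abs_lt]; exact_mod_cast hk
  have hn : (0 : ℝ) < 2 * n := by linarith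
  have hn' : (n : ℝ) ≠ 0 := by linarith
  set θ := π * k / (2 * n)
  have hsin : sin θ ≠ 0 := by
    have hθ₁ : -π < θ := by
      rw [lt_div_iff₀ hn]; nlinarith [pi_pos]
    have hθ₂ : θ < π := by
      rw [div_lt_iff₀ hn]; nlinarith [pi_pos]
    rw [Ne, sin_eq_zero_iff_of_lt_of_lt hθ₁ hθ₂]
    have : (k : ℝ) ≠ 0 := by exact_mod_cast hk0
    positivity
  have hsum := two_mul_sin_mul_sum_range_cos_odd_mul θ n
  rw [show 2 * n * θ = k * π by simp only [θ]; field_simp, sin_int_mul_pi] at hsum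
  have hθ : ∀ m : ℕ, π * (2 * m + 1) * k / (2 * n) = (2 * m + 1) * θ := fun m => by
    simp only [θ]; ring
  simp_rw [hθ]
  exact (mul_eq_zero.mp hsum).resolve_left (by positivity)

theorem sum_range_cos_mul_cos_pi_mul_odd_div (n a b : ℕ) (ha : a < n) (hb : b < n) :
    ∑ m ∈ range n, cos (π * (2 * m + 1) * a / (2 * n)) * cos (π * (2 * m + 1) * b / (2 * n)) =
      (if a = b then (n : ℝ) / 2 else 0) + if a = 0 ∧ b = 0 then (n : ℝ) / 2 else 0 := by
  have hprod : ∀ m : ℕ, cos (π * (2 * m + 1) * a / (2 * n)) * cos (π * (2 * m + 1) * b / (2 * n)) =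
      (cos (π * (2 * m + 1) * ((a - b : ℤ) : ℝ) / (2 * n)) +
        cos (π * (2 * m + 1) * ((a + b : ℤ) : ℝ) / (2 * n))) / 2 := fun m => by
    set x := π * (2 * m + 1) * a / (2 * n)
    set y := π * (2 * m + 1) * b / (2 * n)
    rw [show π * (2 * m + 1) * ((a - b : ℤ) : ℝ) / (2 * n) = x - y by push_cast; ring,
      show π * (2 * m + 1) * ((a + b : ℤ) : ℝ) / (2 * n) = x + y by push_cast; ring,
      cos_sub, cos_add]
    ring
  simp_rw [hprod, ← sum_div, sum_add_distrib]
  rw [sum_range_cos_pi_mul_odd_div n (a - b) (abs_lt.mpr ⟨by omega, by omega⟩),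
    sum_range_cos_pi_mul_odd_div n (a + b) (abs_lt.mpr ⟨by omega, by omega⟩)]
  simp only [show (a : ℤ) - b = 0 ↔ a = b by omega, show (a : ℤ) + b = 0 ↔ a = 0 ∧ b = 0 by omega]
  split_ifs <;> ring

open scoped Kronecker

noncomputable def dctMatrix (M : ℕ) : Matrix (Fin M) (Fin M) ℝ :=
  Matrix.of fun u m => dctAlpha M u * cos (π * (2 * m + 1) * u / (2 * M))

theorem dctAlpha_mul_self_mul_eq_one (M : ℕ) (u : Fin M) :
    dctAlpha M u * dctAlpha M u * ((M : ℝ) / 2 + if (u : ℕ) = 0 then (M : ℝ) / 2 else 0) = 1 := by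
  have hM : (M : ℝ) ≠ 0 := by exact_mod_cast (Fin.pos u).ne'
  unfold dctAlpha
  split_ifs <;> rw [Real.mul_self_sqrt (by positivity)] <;> field_simp <;> ring

theorem dctMatrix_mul_transpose (M : ℕ) : dctMatrix M * (dctMatrix M)ᵀ = 1 := by
  ext u u'
  have hsum := sum_range_cos_mul_cos_pi_mul_odd_div M u u' u.isLt u'.isLt
  rw [← Fin.sum_univ_eq_sum_range
    (fun m => cos (π * (2 * m + 1) * u / (2 * M)) * cos (π * (2 * m + 1) * u' / (2 * M)))] at hsum
  simp only [Matrix.mul_apply, Matrix.transpose_apply, dctMatrix, Matrix.of_apply,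
    mul_mul_mul_comm, ← mul_sum, hsum, Matrix.one_apply, Fin.val_inj]
  by_cases h : u = u'
  · subst h
    simpa only [if_true, and_self] using dctAlpha_mul_self_mul_eq_one M u
  · have h₀ : ¬((u : ℕ) = 0 ∧ (u' : ℕ) = 0) := fun h₀ => h (Fin.ext (h₀.1.trans h₀.2.symm))
    simp [h, h₀]

theorem dctMatrix_transpose_mul (M : ℕ) : (dctMatrix M)ᵀ * dctMatrix M = 1 :=
  mul_eq_one_comm.mp (dctMatrix_mul_transpose M)

noncomputable def dct2Matrix (M N : ℕ) : Matrix (Fin M × Fin N) (Fin M × Fin N) ℝ :=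
  dctMatrix M ⊗ₖ dctMatrix N

theorem dct2Matrix_transpose_mul (M N : ℕ) : (dct2Matrix M N)ᵀ * dct2Matrix M N = 1 := by
  rw [dct2Matrix, ← Matrix.kroneckerMap_transpose, ← Matrix.mul_kronecker_mul,
    dctMatrix_transpose_mul, dctMatrix_transpose_mul, Matrix.one_kronecker_one]

theorem dct2Matrix_mul_transpose (M N : ℕ) : dct2Matrix M N * (dct2Matrix M N)ᵀ = 1 :=
  mul_eq_one_comm.mp (dct2Matrix_transpose_mul M N)

theorem dct2Matrix_apply (M N : ℕ) (u : Fin M) (v : Fin N) (m : Fin M) (n : Fin N) :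
    dct2Matrix M N (u, v) (m, n) = dctAlpha M u * dctAlpha N v * dctKer M N u v m n := by
  simp only [dct2Matrix, Matrix.kroneckerMap_apply, dctMatrix, dctKer, Matrix.of_apply]
  ring

section QDCT

variable {M N : ℕ} {q : Quaternion ℝ}

theorem FQDCTL_apply (X : Matrix (Fin M) (Fin N) (Quaternion ℝ)) (u : Fin M) (v : Fin N) :
    FQDCTL M N q X u v = q * ∑ j, dct2Matrix M N (u, v) j • X j.1 j.2 := by
  simp only [FQDCTL, Matrix.of_apply, Fintype.sum_prod_type, dct2Matrix_apply, smul_sum,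
    mul_sum, mul_smul_comm, smul_smul]

theorem IQDCTL_apply (C : Matrix (Fin M) (Fin N) (Quaternion ℝ)) (m : Fin M) (n : Fin N) :
    IQDCTL M N q C m n = -q * ∑ i, dct2Matrix M N i (m, n) • C i.1 i.2 := by
  simp only [IQDCTL, Matrix.of_apply, Fintype.sum_prod_type, dct2Matrix_apply, mul_sum,
    mul_smul_comm, smul_smul]

theorem IQDCTL_sub (A B : Matrix (Fin M) (Fin N) (Quaternion ℝ)) :
    IQDCTL M N q (A - B) = IQDCTL M N q A - IQDCTL M N q B := by
  refine Matrix.ext fun m n => ?_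
  simp only [IQDCTL_apply, Matrix.sub_apply, smul_sub, sum_sub_distrib, mul_sub]

theorem IQDCTL_FQDCTL (hq : q ^ 2 = -1) (X : Matrix (Fin M) (Fin N) (Quaternion ℝ)) :
    IQDCTL M N q (FQDCTL M N q X) = X := by
  refine Matrix.ext fun m n => ?_
  have hq' : -q * q = 1 := by rw [neg_mul, ← sq, hq, neg_neg]
  simp only [IQDCTL_apply, FQDCTL_apply, ← mul_smul_comm, ← mul_sum, ← mul_assoc, hq', one_mul,
    Prod.mk.eta]
  exact sum_smul_sum_smul_of_transpose_mul_self (dct2Matrix_transpose_mul M N)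
    (fun j => X j.1 j.2) (m, n)

theorem frob_IQDCTL (hq : ‖q‖ = 1) (C : Matrix (Fin M) (Fin N) (Quaternion ℝ)) :
    frob (IQDCTL M N q C) = frob C := by
  unfold frob
  congr 1
  simp only [← Fintype.sum_prod_type', IQDCTL_apply, norm_mul, norm_neg, hq, one_mul]
  exact sum_norm_sq_sum_smul_of_transpose_mul_self (K := (dct2Matrix M N)ᵀ)
    (by rw [Matrix.transpose_transpose, dct2Matrix_mul_transpose]) (fun i => C i.1 i.2)

end QDCT

theorem fqdctL_residual_norm_general (M N : ℕ)
    (q : Quaternion ℝ) (hq : q ^ 2 = -1)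
    (A X : Matrix (Fin M) (Fin N) (Quaternion ℝ)) :
    frob (A - FQDCTL M N q X) = frob (IQDCTL M N q A - X) := by
  calc frob (A - FQDCTL M N q X)
      = frob (IQDCTL M N q (A - FQDCTL M N q X)) :=
        (frob_IQDCTL (norm_eq_one_of_sq_eq_neg_one hq) _).symm
    _ = frob (IQDCTL M N q A - X) := by rw [IQDCTL_sub, IQDCTL_FQDCTL hq]

/-- The residual of `A` against `FQDCT^L(X)` has the same Frobenius norm as the
residual of `IQDCT^L(A)` against `X`. -/
theorem fqdctL_residual_norm (M N : ℕ) (hM : 1 ≤ M) (hN : 1 ≤ N)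
    (q : Quaternion ℝ) (hre : q.re = 0) (hq : q ^ 2 = -1)
    (A X : Matrix (Fin M) (Fin N) (Quaternion ℝ)) :
    frob (A - FQDCTL M N q X) = frob (IQDCTL M N q A - X) :=
  fqdctL_residual_norm_general M N q hq A X
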